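/- Let g be a smooth real function on [-1,1] with Chebyshev expansion g = ∑'_{m≥0} γ_m T_m, where γ_m = (2/π)∫_{-1}^1 g(z)T_m(z)/√(1-z²) dz. If for some k ≥ 1 the quantity V_k = ∫_{-1}^1 |g^{(k+1)}(z)|/√(1-z²) dz is finite, then for all m ≥ k+1, |γ_m| ≤ 2V_k/(π · m(m-1)⋯(m-k)). -/

import Mathlib

open Real intervalIntegral

open Set MeasureTheory


-- cos image
lemma cos_image_Ioo : Real.cos '' Set.Ioo 0 π = Set.Ioo (-1 : ℝ) 1 := by
  apply Set.Subset.antisymm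
  · rintro _ ⟨θ, hθ, rfl⟩
    constructor
    · have := Real.strictAntiOn_cos ⟨le_of_lt hθ.1, hθ.2.le⟩ ⟨Real.pi_pos.le, le_refl π⟩ hθ.2
      simpa [Real.cos_pi] using this
    · have := Real.strictAntiOn_cos ⟨le_refl 0, Real.pi_pos.le⟩ ⟨hθ.1.le, hθ.2.le⟩ hθ.1
      simpa [Real.cos_zero] using this
  · rintro z ⟨h1, h2⟩
    exact ⟨Real.arccos z, ⟨Real.arccos_pos.2 h2, lt_of_le_of_ne (Real.arccos_le_pi z) (fun h => by simp [Real.arccos_eq_pi] at h; linarith)⟩,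
      Real.cos_arccos h1.le h2.le⟩

-- substitution lemma
lemma cos_subst (F G : ℝ → ℝ) (h : ∀ θ ∈ Set.Ioo 0 π, Real.sin θ * F (Real.cos θ) = G θ) :
    ∫ z in (-1:ℝ)..1, F z = ∫ θ in (0:ℝ)..π, G θ := by
  rw [intervalIntegral.integral_of_le (by norm_num : (-1:ℝ) ≤ 1),
    intervalIntegral.integral_of_le Real.pi_pos.le,
    MeasureTheory.integral_Ioc_eq_integral_Ioo, MeasureTheory.integral_Ioc_eq_integral_Ioo,
    ← cos_image_Ioo,
    MeasureTheory.integral_image_eq_integral_abs_deriv_smul measurableSet_Ioo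
      (fun θ _ => (Real.hasDerivAt_cos θ).hasDerivWithinAt)
      (Real.injOn_cos.mono (Set.Ioo_subset_Icc_self)) F]
  apply MeasureTheory.setIntegral_congr_fun measurableSet_Ioo
  intro θ hθ
  have hs : 0 < Real.sin θ := Real.sin_pos_of_pos_of_lt_pi hθ.1 hθ.2
  simp only [smul_eq_mul, abs_neg, abs_of_pos hs]
  exact h θ hθ

noncomputable def chA (f : ℝ → ℝ) (c : ℝ) : ℝ :=
  ∫ θ in (0:ℝ)..π, f (Real.cos θ) * Real.cos (c * θ)

lemma chA_abs_le (f : ℝ → ℝ) (hf : Continuous f) (c : ℝ) :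
    |chA f c| ≤ ∫ θ in (0:ℝ)..π, |f (Real.cos θ)| := by
  refine (intervalIntegral.abs_integral_le_integral_abs Real.pi_pos.le).trans ?_
  apply intervalIntegral.integral_mono_on Real.pi_pos.le
  · exact ((hf.comp Real.continuous_cos).mul (Real.continuous_cos.comp
      (continuous_const.mul continuous_id))).abs.intervalIntegrable _ _
  · exact (hf.comp Real.continuous_cos).abs.intervalIntegrable _ _
  · intro θ _
    rw [abs_mul]
    exact mul_le_of_le_one_right (abs_nonneg _) (Real.abs_cos_le_one _)

lemma chA_rec (f : ℝ → ℝ) (hf : ContDiff ℝ (⊤ : ℕ∞) f) (m : ℕ) (hm : 1 ≤ m) :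
    chA f m = (chA (deriv f) ((m:ℝ) - 1) - chA (deriv f) ((m:ℝ) + 1)) / (2 * m) := by
  have hm0 : (m:ℝ) ≠ 0 := Nat.cast_ne_zero.2 (by omega)
  have hD : Continuous (deriv f) := hf.continuous_deriv (by exact_mod_cast le_top)
  have hu : ∀ θ ∈ Set.uIcc (0:ℝ) π, HasDerivAt (fun θ => f (Real.cos θ))
      (-Real.sin θ * deriv f (Real.cos θ)) θ := by
    intro θ _
    have := ((hf.differentiable (by simp) (Real.cos θ)).hasDerivAt).comp θ (Real.hasDerivAt_cos θ)
    simpa [mul_comm, Function.comp_def] using this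
  have hv : ∀ θ ∈ Set.uIcc (0:ℝ) π, HasDerivAt (fun θ => Real.sin ((m:ℝ) * θ) / m)
      (Real.cos ((m:ℝ) * θ)) θ := by
    intro θ _
    have h1 : HasDerivAt (fun θ : ℝ => (m:ℝ) * θ) ((m:ℝ)) θ := by
      simpa using (hasDerivAt_id θ).const_mul (m:ℝ)
    have h3 := ((Real.hasDerivAt_sin ((m:ℝ) * θ)).comp θ h1).div_const (m:ℝ)
    have h2 : Real.cos ((m:ℝ)*θ) = Real.cos ((m:ℝ)*θ) * (m:ℝ) / m := by field_simp
    rw [h2]; exact h3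
  have hIBP := intervalIntegral.integral_mul_deriv_eq_deriv_mul hu hv
    (((Real.continuous_sin.neg.mul (hD.comp Real.continuous_cos))).intervalIntegrable _ _)
    ((Real.continuous_cos.comp (continuous_const.mul continuous_id)).intervalIntegrable _ _)
  have hbound : Real.sin ((m:ℝ) * π) = 0 := Real.sin_nat_mul_pi m
  simp only [chA]
  rw [hIBP, hbound]
  simp only [mul_zero, zero_div, Real.sin_zero]
  have heq : ∀ θ : ℝ, -(-Real.sin θ * deriv f (Real.cos θ) * (Real.sin ((m:ℝ)*θ) / m)) =
      (deriv f (Real.cos θ) * Real.cos (((m:ℝ)-1) * θ)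
        - deriv f (Real.cos θ) * Real.cos (((m:ℝ)+1) * θ)) / (2*m) := by
    intro θ
    have : Real.cos (((m:ℝ)-1) * θ) - Real.cos (((m:ℝ)+1) * θ)
        = 2 * Real.sin ((m:ℝ)*θ) * Real.sin θ := by
      rw [show ((m:ℝ)-1) * θ = (m:ℝ)*θ - θ by ring, show ((m:ℝ)+1) * θ = (m:ℝ)*θ + θ by ring,
        Real.cos_sub, Real.cos_add]
      ring
    rw [show deriv f (Real.cos θ) * Real.cos (((m:ℝ)-1) * θ)
        - deriv f (Real.cos θ) * Real.cos (((m:ℝ)+1) * θ)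
        = deriv f (Real.cos θ) * (Real.cos (((m:ℝ)-1) * θ) - Real.cos (((m:ℝ)+1) * θ)) by ring,
      this]
    field_simp
  have : ∫ θ in (0:ℝ)..π, -(-Real.sin θ * deriv f (Real.cos θ) * (Real.sin ((m:ℝ)*θ) / m))
      = ∫ θ in (0:ℝ)..π, (deriv f (Real.cos θ) * Real.cos (((m:ℝ)-1) * θ)
        - deriv f (Real.cos θ) * Real.cos (((m:ℝ)+1) * θ)) / (2*m) := by
    exact intervalIntegral.integral_congr (fun θ _ => heq θ)
  have hneg : (0:ℝ) - 0 - (∫ θ in (0:ℝ)..π, -Real.sin θ * deriv f (Real.cos θ) * (Real.sin ((m:ℝ)*θ) / m))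
      = ∫ θ in (0:ℝ)..π, -(-Real.sin θ * deriv f (Real.cos θ) * (Real.sin ((m:ℝ)*θ) / m)) := by
    rw [intervalIntegral.integral_neg]; ring
  have hint1 : IntervalIntegrable (fun θ : ℝ => deriv f (Real.cos θ) * Real.cos (((m:ℝ)-1) * θ))
      MeasureTheory.volume 0 π := by
    exact Continuous.intervalIntegrable ((hD.comp Real.continuous_cos).mul
      (Real.continuous_cos.comp (continuous_const.mul continuous_id))) _ _
  have hint2 : IntervalIntegrable (fun θ : ℝ => deriv f (Real.cos θ) * Real.cos (((m:ℝ)+1) * θ))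
      MeasureTheory.volume 0 π := by
    exact Continuous.intervalIntegrable ((hD.comp Real.continuous_cos).mul
      (Real.continuous_cos.comp (continuous_const.mul continuous_id))) _ _
  rw [hneg, this, intervalIntegral.integral_div, intervalIntegral.integral_sub hint1 hint2]

lemma prodPos {k m : ℕ} (h : k + 1 ≤ m) : 0 < ∏ i ∈ Finset.range (k+1), ((m:ℝ) - i) := by
  apply Finset.prod_pos
  intro i hi
  have hi' : i < k + 1 := Finset.mem_range.1 hi
  have : i < m := by omega
  have : (i:ℝ) < m := by exact_mod_cast this
  linarith

lemma prodShift (k m : ℕ) (h : 1 ≤ m) :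
    (m:ℝ) * ∏ i ∈ Finset.range (k+1), ((↑(m-1) : ℝ) - ↑i)
      = ∏ i ∈ Finset.range (k+2), ((m:ℝ) - i) := by
  have hc : ((m-1:ℕ):ℝ) = (m:ℝ) - 1 := by
    rw [Nat.cast_sub h]; norm_num
  rw [hc, Finset.prod_range_succ' (fun i => ((m:ℝ) - i)) (k+1)]
  simp only [Nat.cast_zero, sub_zero, Nat.cast_add, Nat.cast_one]
  rw [mul_comm]
  congr 1
  apply Finset.prod_congr rfl
  intro i _
  push_cast
  ring

lemma intNonneg (f : ℝ → ℝ) : 0 ≤ ∫ θ in (0:ℝ)..π, |f (Real.cos θ)| :=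
  intervalIntegral.integral_nonneg Real.pi_pos.le (fun _ _ => abs_nonneg _)

lemma chA_bound : ∀ (k : ℕ) (f : ℝ → ℝ), ContDiff ℝ (⊤ : ℕ∞) f → ∀ m : ℕ, k + 1 ≤ m →
    |chA f m| ≤ (∫ θ in (0:ℝ)..π, |iteratedDeriv (k+1) f (Real.cos θ)|) /
      ∏ i ∈ Finset.range (k+1), ((m:ℝ) - i) := by
  intro k
  induction k with
  | zero =>
    intro f hf m hm
    have hDf : ContDiff ℝ (⊤ : ℕ∞) (deriv f) := (contDiff_infty_iff_deriv.mp hf).2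
    have hm' : (0:ℝ) < m := by exact_mod_cast (by omega : 0 < m)
    set I0 := ∫ θ in (0:ℝ)..π, |deriv f (Real.cos θ)| with hI0
    have h1 : |chA (deriv f) ((m:ℝ)-1)| ≤ I0 := chA_abs_le _ hDf.continuous _
    have h2 : |chA (deriv f) ((m:ℝ)+1)| ≤ I0 := chA_abs_le _ hDf.continuous _
    have hI0n : 0 ≤ I0 := intNonneg _
    rw [chA_rec f hf m hm, abs_div, abs_of_pos (by positivity : (0:ℝ) < 2*m)]
    simp only [zero_add, Finset.prod_range_one, Nat.cast_zero, sub_zero, iteratedDeriv_one]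
    rw [div_le_div_iff₀ (by positivity) hm']
    have h3 : |chA (deriv f) ((m:ℝ)-1) - chA (deriv f) ((m:ℝ)+1)|
        ≤ |chA (deriv f) ((m:ℝ)-1)| + |chA (deriv f) ((m:ℝ)+1)| := abs_sub _ _
    nlinarith
  | succ k ih =>
    intro f hf m hm
    have hDf : ContDiff ℝ (⊤ : ℕ∞) (deriv f) := (contDiff_infty_iff_deriv.mp hf).2
    have hm' : (0:ℝ) < m := by exact_mod_cast (by omega : 0 < m)
    have hc1 : ((m-1:ℕ):ℝ) = (m:ℝ) - 1 := by
      rw [Nat.cast_sub (by omega : 1 ≤ m)]; norm_num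
    have hc2 : ((m+1:ℕ):ℝ) = (m:ℝ) + 1 := by push_cast; ring
    set I := ∫ θ in (0:ℝ)..π, |iteratedDeriv (k+1) (deriv f) (Real.cos θ)| with hI
    have hIn : 0 ≤ I := intNonneg _
    set Pm := ∏ i ∈ Finset.range (k+1), ((↑(m-1) : ℝ) - ↑i) with hPm
    set Pp := ∏ i ∈ Finset.range (k+1), ((↑(m+1) : ℝ) - ↑i) with hPp
    have hPmpos : 0 < Pm := prodPos (by omega)
    have hPppos : 0 < Pp := prodPos (by omega)
    have hPle : Pm ≤ Pp := by
      apply Finset.prod_le_prod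
      · intro i hi
        have hi' : i < k + 1 := Finset.mem_range.1 hi
        have : i < m - 1 := by omega
        have : (i:ℝ) < ((m-1:ℕ):ℝ) := by exact_mod_cast this
        linarith
      · intro i _
        have : ((m-1:ℕ):ℝ) ≤ ((m+1:ℕ):ℝ) := by exact_mod_cast (by omega : m-1 ≤ m+1)
        linarith
    have h1 : |chA (deriv f) ((m:ℝ)-1)| ≤ I / Pm := by
      rw [← hc1]; exact ih (deriv f) hDf (m-1) (by omega)
    have h2 : |chA (deriv f) ((m:ℝ)+1)| ≤ I / Pp := by
      rw [← hc2]; exact ih (deriv f) hDf (m+1) (by omega)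
    have h2' : I / Pp ≤ I / Pm := by gcongr
    have hIter : iteratedDeriv (k+1+1) f = iteratedDeriv (k+1) (deriv f) := iteratedDeriv_succ'
    have hProd : ∏ i ∈ Finset.range (k+1+1), ((m:ℝ) - i) = (m:ℝ) * Pm := by
      rw [hPm, prodShift k m (by omega)]
    rw [chA_rec f hf m (by omega), hIter, hProd, abs_div,
      abs_of_pos (by positivity : (0:ℝ) < 2*m)]
    have h3 : |chA (deriv f) ((m:ℝ)-1) - chA (deriv f) ((m:ℝ)+1)|
        ≤ |chA (deriv f) ((m:ℝ)-1)| + |chA (deriv f) ((m:ℝ)+1)| := abs_sub _ _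
    have key : |chA (deriv f) ((m:ℝ)-1) - chA (deriv f) ((m:ℝ)+1)| ≤ 2 * (I / Pm) := by
      linarith
    calc |chA (deriv f) ((m:ℝ)-1) - chA (deriv f) ((m:ℝ)+1)| / (2*m)
        ≤ (2 * (I / Pm)) / (2*m) := by gcongr
      _ = I / ((m:ℝ) * Pm) := by field_simp

theorem chebyshev_coefficient_decay (g : ℝ → ℝ) (hg : ContDiff ℝ (⊤ : ℕ∞) g)
    (k : ℕ) (hk : 1 ≤ k) (V : ℝ)
    (hV : V = ∫ z in (-1 : ℝ)..1, |iteratedDeriv (k + 1) g z| / Real.sqrt (1 - z ^ 2))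
    (hVint : IntervalIntegrable
      (fun z => |iteratedDeriv (k + 1) g z| / Real.sqrt (1 - z ^ 2)) MeasureTheory.volume (-1) 1)
    (m : ℕ) (hm : k + 1 ≤ m) :
    |(2 / π) * ∫ z in (-1 : ℝ)..1,
        g z * (Polynomial.Chebyshev.T ℝ m).eval z / Real.sqrt (1 - z ^ 2)|
      ≤ 2 * V / (π * ∏ i ∈ Finset.range (k + 1), ((m : ℝ) - i)) := by
  have hg' : ContDiff ℝ (⊤ : ℕ∞) g := hg.of_le (by simp)
  have hsq : ∀ θ ∈ Set.Ioo 0 π, Real.sqrt (1 - Real.cos θ ^ 2) = Real.sin θ := by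
    intro θ hθ
    have hs : 0 < Real.sin θ := Real.sin_pos_of_pos_of_lt_pi hθ.1 hθ.2
    rw [show (1:ℝ) - Real.cos θ ^ 2 = Real.sin θ ^ 2 by
      have := Real.sin_sq_add_cos_sq θ; linarith]
    exact Real.sqrt_sq hs.le
  have hA : (∫ z in (-1:ℝ)..1,
        g z * (Polynomial.Chebyshev.T ℝ m).eval z / Real.sqrt (1 - z ^ 2)) = chA g m := by
    rw [chA]
    apply cos_subst
    intro θ hθ
    have hs : 0 < Real.sin θ := Real.sin_pos_of_pos_of_lt_pi hθ.1 hθ.2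
    rw [hsq θ hθ, Polynomial.Chebyshev.T_real_cos]
    have : ((m:ℤ):ℝ) = (m:ℝ) := by push_cast; ring
    rw [this]
    field_simp
  have hVeq : V = ∫ θ in (0:ℝ)..π, |iteratedDeriv (k+1) g (Real.cos θ)| := by
    rw [hV]
    apply cos_subst
    intro θ hθ
    have hs : 0 < Real.sin θ := Real.sin_pos_of_pos_of_lt_pi hθ.1 hθ.2
    rw [hsq θ hθ]
    field_simp
  rw [hA, abs_mul, abs_of_pos (by positivity : (0:ℝ) < 2/π)]
  have hb := chA_bound k g hg' m hm
  rw [← hVeq] at hb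
  have hP : 0 < ∏ i ∈ Finset.range (k+1), ((m:ℝ) - i) := prodPos hm
  have : (2/π) * |chA g m| ≤ (2/π) * (V / ∏ i ∈ Finset.range (k+1), ((m:ℝ) - i)) := by
    apply mul_le_mul_of_nonneg_left hb (by positivity)
  refine this.trans_eq ?_
  rw [div_mul_eq_mul_div, mul_div_assoc, div_div]
  ring_nf
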